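/- arXiv:2407.08024 — 4 statements merged into one kernel-verified Lean document; each statement's English description precedes it below -/
import Mathlib

section
/- Let n ≥ 1, 1 ≤ k ≤ n, and 0 ≤ j < 2^n. For every x ∈ (0,1], G_{n,j}(x + (−1)^{ε_k(x)}·2^{−k}) = G_{n,j'}(x), where j' = j XOR 2^{n−k} (j with its k-th most significant of n binary digits flipped). In other words, composing a dyadic-step indicator with the k-th bit-flip map permutes the functions G_{n,j} according to flipping the k-th bit of the index. -/
open MeasureTheory Set

noncomputable section

/-- The `k`-th binary digit of `x ∈ (0,1]`: `ε_k(x) = (⌈2^k x⌉ − 1) mod 2`. -/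
def eps (k : ℕ) (x : ℝ) : ℤ := (⌈(2 : ℝ) ^ k * x⌉ - 1) % 2

/-- `G`, the indicator function of `(0,1]`. -/
def Gfun : ℝ → ℝ := Set.indicator (Set.Ioc 0 1) 1

/-- `G_{n,j}(x) = 2^{n/2} G(2^n x − j)`. -/
def Gnj (n j : ℕ) (x : ℝ) : ℝ := Real.sqrt 2 ^ n * Gfun ((2 : ℝ) ^ n * x - j)

/-!
`G_{n,j}(y) ≠ 0` exactly when the level-`n` dyadic index `⌈2^n y⌉ - 1` of `y` equals `j`.
For `x > 0` let `m` be that index. Since `⌈2^k x⌉ - 1 = ⌊m / 2^(n-k)⌋`, the digit `ε_k(x)` is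
bit `n - k` of `m`, and the shift by `(-1)^{ε_k(x)} 2^{-k}` moves the index by
`±2^(n-k)`, with the sign that clears the bit when it is set and sets it otherwise:
the new index is `m XOR 2^(n-k)`. As `XOR 2^(n-k)` is an involution, it equals `j`
iff `m = j XOR 2^(n-k)`.
-/

theorem Nat.xor_two_pow_eq (m d : ℕ) : m ^^^ 2 ^ d = 2 ^ d * (m / 2 ^ d ^^^ 1) + m % 2 ^ d := by
  conv_lhs => rw [← Nat.div_add_mod (m ^^^ 2 ^ d) (2 ^ d)]
  rw [Nat.xor_div_two_pow, Nat.xor_mod_two_pow, Nat.div_self (Nat.two_pow_pos d), Nat.mod_self,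
    Nat.xor_zero]

theorem Nat.cast_xor_two_pow (m d : ℕ) :
    ((m ^^^ 2 ^ d : ℕ) : ℤ) = m + (-1) ^ (m / 2 ^ d % 2) * 2 ^ d := by
  have hm : (m : ℤ) = 2 ^ d * (m / 2 ^ d : ℕ) + (m % 2 ^ d : ℕ) := by
    exact_mod_cast (Nat.div_add_mod m (2 ^ d)).symm
  rw [Nat.xor_two_pow_eq, hm]
  rcases Nat.even_or_odd (m / 2 ^ d) with he | ho
  · rw [Nat.xor_one_of_even he, Nat.even_iff.mp he]
    push_cast
    ring
  · have hq : 1 ≤ m / 2 ^ d := ho.pos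
    rw [Nat.xor_one_of_odd ho, Nat.odd_iff.mp ho]
    push_cast [hq]
    ring

theorem Nat.eq_xor_two_pow_iff (m j d : ℕ) :
    m = j ^^^ 2 ^ d ↔ (m : ℤ) + (-1) ^ (m / 2 ^ d % 2) * 2 ^ d = j := by
  rw [← Nat.cast_xor_two_pow, Nat.cast_inj]
  constructor <;> rintro rfl <;> simp

theorem Int.ceil_div_natCast {K : Type*} [Field K] [LinearOrder K] [IsStrictOrderedRing K]
    [FloorRing K] (t : K) {p : ℕ} (hp : 0 < p) : ⌈t / p⌉ = (⌈t⌉ - 1) / p + 1 := by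
  have hp' : (0 : K) < p := by exact_mod_cast hp
  set q := (⌈t⌉ - 1) / (p : ℤ)
  have hq_le : q * p ≤ ⌈t⌉ - 1 := Int.ediv_mul_le _ (by exact_mod_cast hp.ne')
  have hq_lt : ⌈t⌉ - 1 < (q + 1) * p := Int.lt_ediv_add_one_mul_self _ (by exact_mod_cast hp)
  rw [Int.ceil_eq_iff, lt_div_iff₀ hp', div_le_iff₀ hp']
  constructor
  · calc (((q + 1 : ℤ) : K) - 1) * p = ((q * p : ℤ) : K) := by push_cast; ring
      _ ≤ ((⌈t⌉ - 1 : ℤ) : K) := by exact_mod_cast hq_le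
      _ < t := by push_cast; linarith [Int.ceil_lt_add_one t]
  · calc t ≤ ⌈t⌉ := Int.le_ceil t
      _ ≤ (((q + 1) * p : ℤ) : K) := by exact_mod_cast (by omega : ⌈t⌉ ≤ (q + 1) * p)
      _ = _ := by push_cast; ring

theorem Gfun_sub_intCast (t : ℝ) (a : ℤ) : Gfun (t - a) = if ⌈t⌉ = a + 1 then 1 else 0 := by
  have : t - a ∈ Set.Ioc 0 1 ↔ ⌈t⌉ = a + 1 := by
    rw [Int.ceil_eq_iff, Set.mem_Ioc]
    push_cast
    constructor <;> rintro ⟨h₁, h₂⟩ <;> constructor <;> linarith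
  simp only [Gfun, Set.indicator_apply, this, Pi.one_apply]

theorem Gnj_eq_ite (n j : ℕ) (x : ℝ) :
    Gnj n j x = if ⌈(2 : ℝ) ^ n * x⌉ = j + 1 then Real.sqrt 2 ^ n else 0 := by
  rw [Gnj, ← Int.cast_natCast, Gfun_sub_intCast]
  split_ifs <;> simp

theorem eps_eq_of_ceil_eq {k d m : ℕ} {x : ℝ} (hm : ⌈(2 : ℝ) ^ (k + d) * x⌉ = m + 1) :
    eps k x = (m / 2 ^ d % 2 : ℕ) := by
  have hk : (2 : ℝ) ^ k * x = 2 ^ (k + d) * x / (2 ^ d : ℕ) := by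
    push_cast
    field_simp
    ring
  rw [eps, hk, Int.ceil_div_natCast _ (Nat.two_pow_pos _), hm]
  push_cast
  simp

theorem stmt3_general (n k : ℕ) (hkn : k ≤ n)
    (j : ℕ) (x : ℝ) (hx : x ∈ Set.Ioc (0 : ℝ) 1) :
    Gnj n j (x + (-1 : ℝ) ^ eps k x * (2 : ℝ) ^ (-(k : ℤ))) = Gnj n (j ^^^ 2 ^ (n - k)) x := by
  obtain ⟨d, rfl⟩ := Nat.exists_eq_add_of_le hkn
  rw [Nat.add_sub_cancel_left]
  obtain ⟨m, hm⟩ : ∃ m : ℕ, ⌈(2 : ℝ) ^ (k + d) * x⌉ = m + 1 := by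
    have : 0 < ⌈(2 : ℝ) ^ (k + d) * x⌉ := Int.ceil_pos.mpr (by positivity [hx.1])
    exact ⟨(⌈(2 : ℝ) ^ (k + d) * x⌉ - 1).toNat, by omega⟩
  have hflip : (2 : ℝ) ^ (k + d) * (x + (-1) ^ eps k x * 2 ^ (-(k : ℤ)))
      = 2 ^ (k + d) * x + (((-1) ^ (m / 2 ^ d % 2) * 2 ^ d : ℤ) : ℝ) := by
    rw [eps_eq_of_ceil_eq hm, zpow_natCast, zpow_neg, zpow_natCast, pow_add]
    push_cast
    field_simp
  rw [Gnj_eq_ite, Gnj_eq_ite, hflip, Int.ceil_add_intCast, hm]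
  congr 1
  rw [add_right_comm, add_left_inj, add_left_inj, Nat.cast_inj, Nat.eq_xor_two_pow_iff]

/-- Composing `G_{n,j}` with the `k`-th bit-flip map `x ↦ x + (−1)^{ε_k(x)} 2^{−k}`
gives `G_{n,j'}` where `j' = j XOR 2^{n−k}`. -/
theorem stmt3 (n k : ℕ) (hn : 1 ≤ n) (hk1 : 1 ≤ k) (hkn : k ≤ n)
    (j : ℕ) (hj : j < 2 ^ n) (x : ℝ) (hx : x ∈ Set.Ioc (0 : ℝ) 1) :
    Gnj n j (x + (-1 : ℝ) ^ eps k x * (2 : ℝ) ^ (-(k : ℤ))) = Gnj n (j ^^^ 2 ^ (n - k)) x :=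
  stmt3_general n k hkn j x hx
end
end

section
/- For every x ∈ (0,1]: (a) Σ_{j=1}^∞ 2^{−j}·χ_{(0,1/2]}((x + 2^{−j})·(1 − ε_j(x))) equals (1/2)(1 − 2x) if x ∈ (0,1/2] and equals 0 if x ∈ (1/2,1]; (b) Σ_{j=1}^∞ 2^{−j}·χ_{(1/2,1]}((x + 2^{−j})·(1 − ε_j(x))) equals 1/2 if x ∈ (0,1/2] and equals 1 − x if x ∈ (1/2,1]. That is, C_−[χ_{(0,1/2]}] = (1/2)(1−2x)·χ_{(0,1/2]} and C_−[χ_{(1/2,1]}] = (1/2)·χ_{(0,1/2]} + (1−x)·χ_{(1/2,1]} on (0,1]. -/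
open MeasureTheory Set

noncomputable section

/-- `χ_{(0,1/2]}`, the indicator function of `(0,1/2]`. -/
def chiL : ℝ → ℝ := Set.indicator (Set.Ioc 0 (1 / 2)) 1

/-- `χ_{(1/2,1]}`, the indicator function of `(1/2,1]`. -/
def chiR : ℝ → ℝ := Set.indicator (Set.Ioc (1 / 2) 1) 1

/-! Because `χ` vanishes at `0`, only the digits `ε_j(x) = 0` contribute to `C_−[χ](x)`, each with
weight `2^{-j} χ(x + 2^{-j})`, and since `∑ ε_j(x) 2^{-j} = x` these weights add up to `1 - x`.
A digit `ε_j(x) = 0` means that `x` and `x + 2^{-j}` lie in the same dyadic interval of length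
`2^{1-j}`. Hence `x + 2^{-j} ≤ 1` always, and `x + 2^{-j} ≤ 1/2` when `x ≤ 1/2` and `j ≥ 2`;
for `x ≤ 1/2` the first digit is `0` and `x + 1/2 > 1/2`. This decides every value of `χ` that
occurs. -/

open Filter Topology

def cMinus (f : ℝ → ℝ) (x : ℝ) : ℝ :=
  ∑' j : ℕ, (2 : ℝ) ^ (-((j : ℤ) + 1)) *
    f ((x + (2 : ℝ) ^ (-((j : ℤ) + 1))) * (1 - (eps (j + 1) x : ℝ)))

/-- The left end of the dyadic interval `(a / 2^n, (a + 1) / 2^n]` containing `x`. -/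
def dyadicLeft (n : ℕ) (x : ℝ) : ℝ := (⌈(2 : ℝ) ^ n * x⌉ - 1) / 2 ^ n

lemma two_mul_ceil_sub_one_le_ceil_two_mul (y : ℝ) : 2 * ⌈y⌉ - 1 ≤ ⌈2 * y⌉ := by
  rw [Int.le_ceil_iff]
  push_cast
  linarith [Int.ceil_lt_add_one y]

lemma ceil_two_mul_le_two_mul_ceil (y : ℝ) : ⌈2 * y⌉ ≤ 2 * ⌈y⌉ := by
  rw [Int.ceil_le]
  push_cast
  linarith [Int.le_ceil y]

lemma eps_eq_zero_or_one (k : ℕ) (x : ℝ) : eps k x = 0 ∨ eps k x = 1 := by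
  unfold eps
  omega

lemma eps_succ (k : ℕ) (x : ℝ) :
    eps (k + 1) x = ⌈(2 : ℝ) ^ (k + 1) * x⌉ - 2 * ⌈(2 : ℝ) ^ k * x⌉ + 1 := by
  have h2 : (2 : ℝ) ^ (k + 1) * x = 2 * (2 ^ k * x) := by ring
  have hlo := two_mul_ceil_sub_one_le_ceil_two_mul ((2 : ℝ) ^ k * x)
  have hhi := ceil_two_mul_le_two_mul_ceil ((2 : ℝ) ^ k * x)
  rw [← h2] at hlo hhi
  unfold eps
  omega

lemma eps_div_two_pow_succ (k : ℕ) (x : ℝ) :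
    (eps (k + 1) x : ℝ) / 2 ^ (k + 1) = dyadicLeft (k + 1) x - dyadicLeft k x := by
  rw [eps_succ, dyadicLeft, dyadicLeft]
  push_cast
  field_simp
  ring

lemma sub_inv_two_pow_le_dyadicLeft (n : ℕ) (x : ℝ) : x - (2 ^ n)⁻¹ ≤ dyadicLeft n x := by
  rw [dyadicLeft, le_div_iff₀ (by positivity), sub_mul, inv_mul_cancel₀ (by positivity)]
  linarith [Int.le_ceil ((2 : ℝ) ^ n * x)]

lemma dyadicLeft_lt (n : ℕ) (x : ℝ) : dyadicLeft n x < x := by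
  rw [dyadicLeft, div_lt_iff₀ (by positivity)]
  linarith [Int.ceil_lt_add_one ((2 : ℝ) ^ n * x)]

lemma tendsto_dyadicLeft (x : ℝ) : Tendsto (fun n ↦ dyadicLeft n x) atTop (𝓝 x) := by
  have hinv : Tendsto (fun n : ℕ ↦ x - (2 ^ n)⁻¹) atTop (𝓝 x) := by
    simpa using tendsto_const_nhds.sub (tendsto_inv_atTop_zero.comp
      (tendsto_pow_atTop_atTop_of_one_lt (one_lt_two : (1 : ℝ) < 2)))
  exact tendsto_of_tendsto_of_tendsto_of_le_of_le hinv tendsto_const_nhds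
    (sub_inv_two_pow_le_dyadicLeft · x) (fun n ↦ (dyadicLeft_lt n x).le)

lemma hasSum_eps_div_two_pow (x : ℝ) :
    HasSum (fun j : ℕ ↦ (eps (j + 1) x : ℝ) / 2 ^ (j + 1)) (x - dyadicLeft 0 x) := by
  have hnonneg (j : ℕ) : 0 ≤ (eps (j + 1) x : ℝ) / 2 ^ (j + 1) := by
    rcases eps_eq_zero_or_one (j + 1) x with h | h <;> simp [h]
  rw [hasSum_iff_tendsto_nat_of_nonneg hnonneg]
  simp_rw [eps_div_two_pow_succ, Finset.sum_range_sub (dyadicLeft · x)]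
  exact (tendsto_dyadicLeft x).sub_const _

lemma dyadicLeft_zero_of_mem_Ioc {x : ℝ} (hx : x ∈ Ioc 0 1) : dyadicLeft 0 x = 0 := by
  have : ⌈x⌉ = 1 := Int.ceil_eq_iff.2 ⟨by norm_num [hx.1], by exact_mod_cast hx.2⟩
  simp [dyadicLeft, this]

lemma hasSum_one_sub_eps_div_two_pow {x : ℝ} (hx : x ∈ Ioc 0 1) :
    HasSum (fun j : ℕ ↦ (1 - eps (j + 1) x : ℝ) / 2 ^ (j + 1)) (1 - x) := by
  have hgeom : HasSum (fun j : ℕ ↦ (1 : ℝ) / 2 ^ (j + 1)) 1 := by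
    simpa only [div_div, ← pow_succ'] using hasSum_geometric_two' 1
  simpa [sub_div, dyadicLeft_zero_of_mem_Ioc hx] using hgeom.sub (hasSum_eps_div_two_pow x)

lemma add_inv_two_pow_le_of_eps_eq_zero {k : ℕ} {x : ℝ} {a : ℤ} (h : eps (k + 1) x = 0)
    (hx : x ≤ a / 2 ^ k) : x + (2 ^ (k + 1))⁻¹ ≤ a / 2 ^ k := by
  have hceil : ⌈(2 : ℝ) ^ k * x⌉ ≤ a := by
    rw [Int.ceil_le]
    rwa [le_div_iff₀' (by positivity)] at hx
  have hodd : ⌈(2 : ℝ) ^ (k + 1) * x⌉ ≤ 2 * a - 1 := by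
    have := eps_succ k x
    omega
  have : (2 : ℝ) ^ (k + 1) * x ≤ 2 * a - 1 :=
    (Int.le_ceil _).trans (by exact_mod_cast hodd)
  have hhalf : ((2 : ℝ) ^ (k + 1))⁻¹ * 2 ^ k = 1 / 2 := by
    rw [pow_succ]
    field_simp
  rw [le_div_iff₀ (by positivity), add_mul, hhalf]
  rw [pow_succ] at this
  linarith

lemma add_inv_two_pow_le_one {j : ℕ} {x : ℝ} (hx : x ≤ 1) (h : eps (j + 1) x = 0) :
    x + (2 ^ (j + 1))⁻¹ ≤ 1 := by
  have hj : ((2 ^ j : ℤ) : ℝ) / 2 ^ j = 1 := by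
    push_cast
    exact div_self (by positivity)
  simpa only [hj] using add_inv_two_pow_le_of_eps_eq_zero (a := 2 ^ j) h (hj ▸ hx)

lemma add_inv_two_pow_le_half {j : ℕ} {x : ℝ} (hx : x ≤ 1 / 2) (h : eps (j + 2) x = 0) :
    x + (2 ^ (j + 2))⁻¹ ≤ 1 / 2 := by
  have hj : ((2 ^ j : ℤ) : ℝ) / 2 ^ (j + 1) = 1 / 2 := by
    push_cast
    rw [pow_succ]
    field_simp
  simpa only [hj] using add_inv_two_pow_le_of_eps_eq_zero (k := j + 1) (a := 2 ^ j) h (hj ▸ hx)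

lemma eps_one_of_mem_Ioc_zero_half {x : ℝ} (hx : x ∈ Ioc 0 (1 / 2)) : eps 1 x = 0 := by
  have : ⌈(2 : ℝ) ^ 1 * x⌉ = 1 :=
    Int.ceil_eq_iff.2 ⟨by norm_num [hx.1], by norm_num; linarith [hx.2]⟩
  rw [eps, this]
  rfl

lemma chiL_zero : chiL 0 = 0 := indicator_of_notMem (by simp) _

lemma chiR_zero : chiR 0 = 0 := indicator_of_notMem (by norm_num) _

lemma chiL_of_mem {y : ℝ} (hy : y ∈ Ioc 0 (1 / 2)) : chiL y = 1 := indicator_of_mem hy _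

lemma chiR_of_mem {y : ℝ} (hy : y ∈ Ioc (1 / 2) 1) : chiR y = 1 := indicator_of_mem hy _

lemma chiL_of_half_lt {y : ℝ} (hy : 1 / 2 < y) : chiL y = 0 :=
  indicator_of_notMem (fun h ↦ hy.not_ge h.2) _

lemma chiR_of_le_half {y : ℝ} (hy : y ≤ 1 / 2) : chiR y = 0 :=
  indicator_of_notMem (fun h ↦ hy.not_gt h.1) _

lemma cMinus_eq_tsum {f : ℝ → ℝ} (hf : f 0 = 0) (x : ℝ) :
    cMinus f x = ∑' j : ℕ, (1 - eps (j + 1) x : ℝ) / 2 ^ (j + 1) * f (x + (2 ^ (j + 1))⁻¹) := by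
  refine tsum_congr fun j ↦ ?_
  have hpow : (2 : ℝ) ^ (-((j : ℤ) + 1)) = (2 ^ (j + 1))⁻¹ := by
    rw [← zpow_natCast, ← zpow_neg]
    push_cast
    rfl
  rw [hpow]
  rcases eps_eq_zero_or_one (j + 1) x with h | h <;> simp [h, hf, div_eq_inv_mul]

lemma cMinus_chiL_of_half_lt {x : ℝ} (hx : 1 / 2 < x) : cMinus chiL x = 0 := by
  rw [cMinus_eq_tsum chiL_zero]
  refine (tsum_congr fun j ↦ ?_).trans tsum_zero
  rw [chiL_of_half_lt (lt_add_of_lt_of_pos hx (by positivity)), mul_zero]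

lemma cMinus_chiR_of_half_lt {x : ℝ} (hx : x ∈ Ioc (1 / 2) 1) : cMinus chiR x = 1 - x := by
  rw [cMinus_eq_tsum chiR_zero]
  refine (tsum_congr fun j ↦ ?_).trans
    (hasSum_one_sub_eps_div_two_pow ⟨by linarith [hx.1], hx.2⟩).tsum_eq
  rcases eps_eq_zero_or_one (j + 1) x with h | h
  · rw [chiR_of_mem ⟨lt_add_of_lt_of_pos hx.1 (by positivity), add_inv_two_pow_le_one hx.2 h⟩,
      mul_one]
  · simp [h]

lemma cMinus_chiR_of_le_half {x : ℝ} (hx : x ∈ Ioc 0 (1 / 2)) : cMinus chiR x = 1 / 2 := by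
  rw [cMinus_eq_tsum chiR_zero, tsum_eq_single 0]
  · rw [eps_one_of_mem_Ioc_zero_half hx, chiR_of_mem ⟨by linarith [hx.1], by linarith [hx.2]⟩]
    norm_num
  · rintro (_ | j) hj
    · contradiction
    rcases eps_eq_zero_or_one (j + 2) x with h | h
    · rw [chiR_of_le_half (add_inv_two_pow_le_half hx.2 h), mul_zero]
    · simp [h]

lemma cMinus_chiL_of_le_half {x : ℝ} (hx : x ∈ Ioc 0 (1 / 2)) :
    cMinus chiL x = 1 / 2 * (1 - 2 * x) := by
  have hsum := hasSum_one_sub_eps_div_two_pow ⟨hx.1, by linarith [hx.2]⟩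
  rw [← hasSum_nat_add_iff' 1] at hsum
  rw [cMinus_eq_tsum chiL_zero]
  refine HasSum.tsum_eq ((hasSum_nat_add_iff' 1).1 ?_)
  convert hsum using 1
  · ext j
    rcases eps_eq_zero_or_one (j + 2) x with h | h
    · rw [chiL_of_mem ⟨add_pos hx.1 (by positivity), add_inv_two_pow_le_half hx.2 h⟩, mul_one]
    · simp [h]
  · simp [eps_one_of_mem_Ioc_zero_half hx, chiL_of_half_lt (by linarith [hx.1] : (1 : ℝ) / 2 < x + 2⁻¹)]
    ring

/-- `C_−[χ_{(0,1/2]}] = (1/2)(1−2x)·χ_{(0,1/2]}` and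
`C_−[χ_{(1/2,1]}] = (1/2)·χ_{(0,1/2]} + (1−x)·χ_{(1/2,1]}` on `(0,1]`. -/
theorem stmt8 (x : ℝ) (hx : x ∈ Set.Ioc (0 : ℝ) 1) :
    (∑' j : ℕ, (2 : ℝ) ^ (-((j : ℤ) + 1)) *
        chiL ((x + (2 : ℝ) ^ (-((j : ℤ) + 1))) * (1 - (eps (j + 1) x : ℝ)))) =
      (if x ≤ 1 / 2 then (1 / 2) * (1 - 2 * x) else 0) ∧
    (∑' j : ℕ, (2 : ℝ) ^ (-((j : ℤ) + 1)) *
        chiR ((x + (2 : ℝ) ^ (-((j : ℤ) + 1))) * (1 - (eps (j + 1) x : ℝ)))) =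
      (if x ≤ 1 / 2 then 1 / 2 else 1 - x) := by
  change cMinus chiL x = _ ∧ cMinus chiR x = _
  split_ifs with h
  · exact ⟨cMinus_chiL_of_le_half ⟨hx.1, h⟩, cMinus_chiR_of_le_half ⟨hx.1, h⟩⟩
  · have h' : 1 / 2 < x := not_le.1 h
    exact ⟨cMinus_chiL_of_half_lt h', cMinus_chiR_of_half_lt ⟨h', hx.2⟩⟩
end
end

section
/- Let θ ∈ ℝ and n ≥ 1. The set of eigenvalues of the 2^n-by-2^n complex matrix D_n^θ equals { s·(2k+1)/2^n : k ∈ ℕ, 0 ≤ k < 2^{n−1}, s ∈ {+1, −1} }. -/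
open Matrix Complex

noncomputable section

/-- Identification `Fin (2^n) ⊕ Fin (2^n) ≃ Fin (2^(n+1))` (first summand first). -/
def blockEquiv (n : ℕ) : Fin (2 ^ n) ⊕ Fin (2 ^ n) ≃ Fin (2 ^ (n + 1)) :=
  finSumFinEquiv.trans (finCongr (by rw [pow_succ]; omega))

/-- `D_0^θ = [0]`, `D_{n+1}^θ = (1/2)·[[D_n^θ, e^{iθ} I],[e^{−iθ} I, D_n^θ]]`. -/
def Dtheta (θ : ℝ) : (n : ℕ) → Matrix (Fin (2 ^ n)) (Fin (2 ^ n)) ℂ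
  | 0 => 0
  | n + 1 => Matrix.reindex (blockEquiv n) (blockEquiv n)
      ((1 / 2 : ℂ) • Matrix.fromBlocks (Dtheta θ n) (Complex.exp (θ * Complex.I) • 1)
        (Complex.exp (-θ * Complex.I) • 1) (Dtheta θ n))

lemma mem_spec {m : Type*} [Fintype m] [DecidableEq m] (M : Matrix m m ℂ) (z : ℂ) :
    z ∈ spectrum ℂ M ↔ (z • (1 : Matrix m m ℂ) - M).det = 0 := by
  rw [spectrum.mem_iff, Algebra.algebraMap_eq_smul_one,
    Matrix.isUnit_iff_isUnit_det, isUnit_iff_ne_zero, not_not]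

set_option maxHeartbeats 1000000 in
lemma spec_step (θ : ℝ) (n : ℕ) :
    spectrum ℂ (Dtheta θ (n + 1)) =
      {z : ℂ | 2 * z - 1 ∈ spectrum ℂ (Dtheta θ n) ∨ 2 * z + 1 ∈ spectrum ℂ (Dtheta θ n)} := by
  set D := Dtheta θ n with hD
  set a := Complex.exp (θ * Complex.I) with ha
  set b := Complex.exp (-θ * Complex.I) with hb
  have hab : a * b = 1 := by
    rw [ha, hb, ← Complex.exp_add]
    ring_nf
    exact Complex.exp_zero
  have hba : b * a = 1 := by rw [mul_comm]; exact hab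
  set M := (1 / 2 : ℂ) • Matrix.fromBlocks D (a • 1) (b • 1) D with hM
  have h1 : spectrum ℂ (Dtheta θ (n + 1)) = spectrum ℂ M := by
    show spectrum ℂ (Matrix.reindex (blockEquiv n) (blockEquiv n) M) = spectrum ℂ M
    exact AlgEquiv.spectrum_eq (Matrix.reindexAlgEquiv ℂ ℂ (blockEquiv n)) M
  set X := (1 / 2 : ℂ) • (D + 1) with hX
  set Y := (1 / 2 : ℂ) • (D - 1) with hY
  set P : Matrix (Fin (2^n) ⊕ Fin (2^n)) (Fin (2^n) ⊕ Fin (2^n)) ℂ :=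
    Matrix.fromBlocks 1 1 (b • 1) (-(b • 1)) with hP
  set Q : Matrix (Fin (2^n) ⊕ Fin (2^n)) (Fin (2^n) ⊕ Fin (2^n)) ℂ :=
    (1 / 2 : ℂ) • Matrix.fromBlocks 1 (a • 1) 1 (-(a • 1)) with hQ
  have hPQ : P * Q = 1 := by
    rw [hP, hQ, Matrix.mul_smul, Matrix.fromBlocks_multiply]
    simp only [Matrix.one_mul, Matrix.mul_one, Matrix.mul_neg, Matrix.neg_mul,
      Matrix.smul_mul, Matrix.mul_smul, smul_smul, hab, hba, one_smul, neg_neg]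
    rw [← Matrix.fromBlocks_one (l := Fin (2^n)) (m := Fin (2^n)), Matrix.fromBlocks_smul,
      Matrix.fromBlocks_inj]
    refine ⟨?_, ?_, ?_, ?_⟩
    all_goals match_scalars <;> first
      | ring1
      | linear_combination ((1:ℂ)/2) * hab
      | linear_combination (-(1:ℂ)/2) * hab
      | linear_combination hab
      | linear_combination -hab
      | linear_combination ((1:ℂ)/2) * hba
      | linear_combination (-(1:ℂ)/2) * hba
      | linear_combination hba
      | linear_combination -hba
  have hsim : M = P * Matrix.fromBlocks X 0 0 Y * Q := by
    rw [hP, hQ, Matrix.mul_smul, Matrix.fromBlocks_multiply, Matrix.fromBlocks_multiply]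
    simp only [Matrix.one_mul, Matrix.mul_one, Matrix.mul_zero, Matrix.zero_mul,
      Matrix.mul_neg, Matrix.neg_mul, Matrix.smul_mul, Matrix.mul_smul, smul_smul,
      smul_neg, neg_smul, hab, hba, one_smul, neg_neg, add_zero, zero_add]
    rw [hM]
    simp only [Matrix.fromBlocks_smul]
    rw [Matrix.fromBlocks_inj]
    refine ⟨?_, ?_, ?_, ?_⟩
    all_goals match_scalars <;> first
      | ring1
      | linear_combination ((1:ℂ)/2) * hab
      | linear_combination (-(1:ℂ)/2) * hab
      | linear_combination hab
      | linear_combination -hab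
      | linear_combination ((1:ℂ)/2) * hba
      | linear_combination (-(1:ℂ)/2) * hba
      | linear_combination hba
      | linear_combination -hba
  have hdetPQ : P.det * Q.det = 1 := by
    rw [← Matrix.det_mul, hPQ, Matrix.det_one]
  have key : ∀ z : ℂ, (z • (1 : Matrix (Fin (2^n) ⊕ Fin (2^n)) (Fin (2^n) ⊕ Fin (2^n)) ℂ)
      - M).det = P.det * Q.det * ((z • 1 - X).det * (z • 1 - Y).det) := by
    intro z
    have e2 : z • (1 : Matrix (Fin (2^n) ⊕ Fin (2^n)) (Fin (2^n) ⊕ Fin (2^n)) ℂ)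
        - Matrix.fromBlocks X 0 0 Y
        = Matrix.fromBlocks (z • 1 - X) 0 0 (z • 1 - Y) := by
      rw [← Matrix.fromBlocks_one (l := Fin (2^n)) (m := Fin (2^n)), Matrix.fromBlocks_smul,
        sub_eq_add_neg, Matrix.fromBlocks_neg, Matrix.fromBlocks_add]
      simp [sub_eq_add_neg]
    have e1 : P * Matrix.fromBlocks (z • 1 - X) 0 0 (z • 1 - Y) * Q
        = z • (1 : Matrix (Fin (2^n) ⊕ Fin (2^n)) (Fin (2^n) ⊕ Fin (2^n)) ℂ) - M := by
      rw [← e2]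
      simp only [Matrix.mul_sub, Matrix.sub_mul, Matrix.mul_smul, Matrix.smul_mul,
        Matrix.mul_one, hPQ]
      rw [← hsim]
    rw [← e1, Matrix.det_mul, Matrix.det_mul, Matrix.det_fromBlocks_zero₂₁]
    ring
  have hPd : P.det ≠ 0 := fun h => by simp [h] at hdetPQ
  have hQd : Q.det ≠ 0 := fun h => by simp [h] at hdetPQ
  have hc : ((1:ℂ)/2) ^ Fintype.card (Fin (2^n)) ≠ 0 := pow_ne_zero _ (by norm_num)
  ext z
  rw [h1, mem_spec, key, Set.mem_setOf_eq, mem_spec, mem_spec]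
  have hX0 : z • (1 : Matrix (Fin (2^n)) (Fin (2^n)) ℂ) - X
      = (1/2 : ℂ) • ((2*z-1) • 1 - D) := by rw [hX]; module
  have hY0 : z • (1 : Matrix (Fin (2^n)) (Fin (2^n)) ℂ) - Y
      = (1/2 : ℂ) • ((2*z+1) • 1 - D) := by rw [hY]; module
  rw [hdetPQ, one_mul, hX0, hY0,
    Matrix.det_smul ((2*z-1) • (1 : Matrix (Fin (2^n)) (Fin (2^n)) ℂ) - D) (1/2),
    Matrix.det_smul ((2*z+1) • (1 : Matrix (Fin (2^n)) (Fin (2^n)) ℂ) - D) (1/2)]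
  simp only [mul_eq_zero, hc, false_or]

def Sj (n : ℕ) : Set ℂ := {z : ℂ | ∃ j : ℤ, Odd j ∧ j.natAbs < 2 ^ n ∧ z = (j : ℂ) / 2 ^ n}

lemma spec_zero (θ : ℝ) : spectrum ℂ (Dtheta θ 0) = {0} := by
  show spectrum ℂ (0 : Matrix (Fin (2 ^ 0)) (Fin (2 ^ 0)) ℂ) = {0}
  haveI : Nonempty (Fin (2 ^ 0)) := ⟨⟨0, by norm_num⟩⟩
  exact spectrum.zero_eq

lemma shift1 (m : ℕ) (z : ℂ) (j : ℤ) :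
    2 * z - 1 = (j : ℂ) / 2 ^ m ↔ z = ((j + 2 ^ m : ℤ) : ℂ) / 2 ^ (m + 1) := by
  have h1 : ((2 : ℂ)) ^ m ≠ 0 := pow_ne_zero _ two_ne_zero
  have h2 : ((2 : ℂ)) ^ (m + 1) ≠ 0 := pow_ne_zero _ two_ne_zero
  constructor <;> intro h
  · rw [eq_div_iff h1] at h
    rw [eq_div_iff h2]
    push_cast at h ⊢
    linear_combination h
  · rw [eq_div_iff h2] at h
    rw [eq_div_iff h1]
    push_cast at h ⊢
    linear_combination h

lemma shift2 (m : ℕ) (z : ℂ) (j : ℤ) :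
    2 * z + 1 = (j : ℂ) / 2 ^ m ↔ z = ((j - 2 ^ m : ℤ) : ℂ) / 2 ^ (m + 1) := by
  have h1 : ((2 : ℂ)) ^ m ≠ 0 := pow_ne_zero _ two_ne_zero
  have h2 : ((2 : ℂ)) ^ (m + 1) ≠ 0 := pow_ne_zero _ two_ne_zero
  constructor <;> intro h
  · rw [eq_div_iff h1] at h
    rw [eq_div_iff h2]
    push_cast at h ⊢
    linear_combination h
  · rw [eq_div_iff h2] at h
    rw [eq_div_iff h1]
    push_cast at h ⊢
    linear_combination h

lemma spec_Sj (θ : ℝ) : ∀ n, 1 ≤ n → spectrum ℂ (Dtheta θ n) = Sj n := by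
  intro n hn
  induction n with
  | zero => omega
  | succ m ih =>
    rcases Nat.eq_zero_or_pos m with rfl | hm
    · rw [spec_step, spec_zero]
      ext z
      simp only [Set.mem_setOf_eq, Set.mem_singleton_iff, Sj]
      constructor
      · rintro (h | h)
        · refine ⟨1, ⟨0, by ring⟩, by norm_num, ?_⟩
          push_cast
          rw [eq_div_iff (by norm_num : ((2:ℂ))^1 ≠ 0)]
          linear_combination (2:ℂ)^0 * h
        · refine ⟨-1, ⟨-1, by ring⟩, by norm_num, ?_⟩
          push_cast
          rw [eq_div_iff (by norm_num : ((2:ℂ))^1 ≠ 0)]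
          linear_combination (2:ℂ)^0 * h
      · rintro ⟨j, ⟨t, rfl⟩, hlt, rfl⟩
        have ht : t = 0 ∨ t = -1 := by omega
        rcases ht with rfl | rfl
        · left; push_cast; ring_nf
        · right; push_cast; ring_nf
    · obtain ⟨p, rfl⟩ : ∃ p, m = p + 1 := ⟨m - 1, by omega⟩
      rw [spec_step, ih hm]
      ext z
      simp only [Set.mem_setOf_eq, Sj]
      have e1 : (((2:ℕ) ^ (p+1) : ℕ) : ℤ) = 2 ^ (p+1) := by push_cast; ring
      have e2 : (((2:ℕ) ^ (p+2) : ℕ) : ℤ) = 2 ^ (p+2) := by push_cast; ring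
      have e3 : (2 : ℤ) ^ (p+2) = 2 * 2 ^ (p+1) := by ring
      constructor
      · rintro (⟨j, hodd, hlt, hz⟩ | ⟨j, hodd, hlt, hz⟩)
        · refine ⟨j + 2 ^ (p+1), ?_, ?_, ?_⟩
          · obtain ⟨t, rfl⟩ := hodd
            exact ⟨t + 2 ^ p, by ring⟩
          · omega
          · exact (shift1 (p+1) z j).mp hz
        · refine ⟨j - 2 ^ (p+1), ?_, ?_, ?_⟩
          · obtain ⟨t, rfl⟩ := hodd
            exact ⟨t - 2 ^ p, by ring⟩
          · omega
          · exact (shift2 (p+1) z j).mp hz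
      · rintro ⟨j, hodd, hlt, rfl⟩
        have hj0 : j ≠ 0 := by
          rintro rfl
          exact (Int.not_odd_iff_even.mpr Even.zero) hodd
        rcases lt_or_gt_of_ne hj0 with hj | hj
        · right
          refine ⟨j + 2 ^ (p+1), ?_, ?_, ?_⟩
          · obtain ⟨t, rfl⟩ := hodd
            exact ⟨t + 2 ^ p, by ring⟩
          · omega
          · rw [shift2, show j + 2 ^ (p+1) - 2 ^ (p+1) = j from by ring]
        · left
          refine ⟨j - 2 ^ (p+1), ?_, ?_, ?_⟩
          · obtain ⟨t, rfl⟩ := hodd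
            exact ⟨t - 2 ^ p, by ring⟩
          · omega
          · rw [shift1, show j - 2 ^ (p+1) + 2 ^ (p+1) = j from by ring]

/-- The set of eigenvalues of `D_n^θ` is `{ ±(2k+1)/2^n : 0 ≤ k < 2^{n−1} }`. -/
theorem stmt12 (θ : ℝ) (n : ℕ) (hn : 1 ≤ n) :
    spectrum ℂ (Dtheta θ n) =
      {z : ℂ | ∃ k : ℕ, k < 2 ^ (n - 1) ∧ ∃ s : ℤ, (s = 1 ∨ s = -1) ∧
        z = (s : ℂ) * (2 * (k : ℂ) + 1) / 2 ^ n} := by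
  obtain ⟨m, rfl⟩ : ∃ m, n = m + 1 := ⟨n - 1, by omega⟩
  rw [spec_Sj θ (m + 1) (by omega)]
  ext z
  simp only [Sj, Set.mem_setOf_eq, Nat.add_sub_cancel]
  have e1 : (((2:ℕ) ^ m : ℕ) : ℤ) = 2 ^ m := by push_cast; ring
  have e2 : (((2:ℕ) ^ (m+1) : ℕ) : ℤ) = 2 ^ (m+1) := by push_cast; ring
  have e3 : (2 : ℤ) ^ (m+1) = 2 * 2 ^ m := by ring
  constructor
  · rintro ⟨j, ⟨t, rfl⟩, hlt, rfl⟩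
    rcases le_or_gt 0 t with ht | ht
    · refine ⟨t.toNat, by omega, 1, Or.inl rfl, ?_⟩
      have h1 : ((t.toNat : ℕ) : ℂ) = (t : ℂ) := by
        exact_mod_cast congrArg (fun x : ℤ => (x : ℂ)) (Int.toNat_of_nonneg ht)
      push_cast
      rw [h1]
      ring
    · refine ⟨(-t - 1).toNat, by omega, -1, Or.inr rfl, ?_⟩
      have h1 : (((-t - 1).toNat : ℕ) : ℂ) = (-t - 1 : ℂ) := by
        exact_mod_cast congrArg (fun x : ℤ => (x : ℂ))
          (Int.toNat_of_nonneg (by omega : (0:ℤ) ≤ -t - 1))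
      push_cast
      rw [h1]
      ring
  · rintro ⟨k, hk, s, hs, rfl⟩
    refine ⟨s * (2 * k + 1), ?_, ?_, ?_⟩
    · rcases hs with rfl | rfl
      · exact ⟨k, by push_cast; ring⟩
      · exact ⟨-(k : ℤ) - 1, by push_cast; ring⟩
    · rcases hs with rfl | rfl <;> omega
    · push_cast
      ring
end
end

section
/- Let θ ∈ ℝ and let f : ℝ → ℂ be measurable with ∫_{(0,1]} |f|² < ∞. Then for almost every x ∈ (0,1] the series C_θ[f](x) := Σ_{k=1}^∞ 2^{−k}·(cos θ + i·(−1)^{ε_k(x)}·sin θ)·f(x + (−1)^{ε_k(x)}·2^{−k}) converges absolutely, and ∫_{(0,1]} |C_θ[f](x)|² dx ≤ ∫_{(0,1]} |f(x)|² dx. That is, the operator C_θ = cos θ·C_x + sin θ·C_y on L²(0,1] has operator norm at most 1. -/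
open MeasureTheory Set

noncomputable section

/-- The summand `2^{−k}(cos θ + i(−1)^{ε_k(x)} sin θ) f(x + (−1)^{ε_k(x)} 2^{−k})` of the
series defining `C_θ[f](x) = (cos θ · C_x + sin θ · C_y)[f](x)`; here `k : ℕ` is
zero-indexed (so it stands for the `(k+1)`-st term). -/
def CthetaTerm (θ : ℝ) (f : ℝ → ℂ) (x : ℝ) (k : ℕ) : ℂ :=
  (2 : ℂ) ^ (-((k : ℤ) + 1)) *
    ((Real.cos θ : ℂ) + Complex.I * (-1 : ℂ) ^ eps (k + 1) x * (Real.sin θ : ℂ)) *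
    f (x + (-1 : ℝ) ^ eps (k + 1) x * (2 : ℝ) ^ (-((k : ℤ) + 1)))

/-!
Let `digitFlip n x = x + (-1) ^ ε_n(x) 2⁻ⁿ` be `x` with its `n`-th binary digit flipped. The
coefficient `cos θ ± i sin θ` has modulus one, so the `k`-th term of `C_θ[f](x)` has modulus
`2⁻ᵏ |f (digitFlip k x)|`. For `k ≥ 1`, `digitFlip k` preserves Lebesgue measure on `(0,1]`: on
each dyadic block of length `2¹⁻ᵏ` it swaps the two halves by translation. Since the weights `2⁻ᵏ`
sum to one, Jensen's inequality gives `(∑ₖ 2⁻ᵏ |f ∘ digitFlip k|)² ≤ ∑ₖ 2⁻ᵏ |f ∘ digitFlip k|²`,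
whose integral over `(0,1]` is `∑ₖ 2⁻ᵏ ‖f‖₂² = ‖f‖₂²`. In particular `∑ₖ 2⁻ᵏ |f ∘ digitFlip k|`
is finite almost everywhere.
-/

open scoped ENNReal

theorem ENNReal.two_mul_le_add_sq (a b : ℝ≥0∞) : 2 * a * b ≤ a ^ 2 + b ^ 2 := by
  rcases eq_or_ne a ⊤ with rfl | ha
  · simp
  rcases eq_or_ne b ⊤ with rfl | hb
  · simp
  lift a to NNReal using ha
  lift b to NNReal using hb
  exact_mod_cast _root_.two_mul_le_add_sq a b

theorem ENNReal.sq_tsum_mul_le {ι : Type*} (w a : ι → ℝ≥0∞) :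
    (∑' i, w i * a i) ^ 2 ≤ (∑' i, w i) * ∑' i, w i * a i ^ 2 := by
  have mul_tsum_tsum : ∀ u v : ι → ℝ≥0∞, (∑' i, u i) * ∑' j, v j = ∑' i, ∑' j, u i * v j := by
    intro u v
    simp_rw [ENNReal.tsum_mul_left, ENNReal.tsum_mul_right]
  refine (ENNReal.mul_le_mul_iff_right two_ne_zero ENNReal.ofNat_ne_top).1 ?_
  calc 2 * (∑' i, w i * a i) ^ 2
      = ∑' i, ∑' j, w i * w j * (2 * a i * a j) := by
        simp_rw [sq, mul_tsum_tsum, ← ENNReal.tsum_mul_left]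
        exact tsum_congr fun i => tsum_congr fun j => by ring
    _ ≤ ∑' i, ∑' j, (w i * a i ^ 2 * w j + w i * (w j * a j ^ 2)) := by
        gcongr with i j
        calc w i * w j * (2 * a i * a j) ≤ w i * w j * (a i ^ 2 + a j ^ 2) := by
              gcongr; exact ENNReal.two_mul_le_add_sq _ _
          _ = _ := by ring
    _ = 2 * ((∑' i, w i) * ∑' i, w i * a i ^ 2) := by
        simp_rw [ENNReal.tsum_add, ← mul_tsum_tsum]
        ring

theorem ENNReal.tsum_inv_two_pow_succ : ∑' k : ℕ, (2⁻¹ : ℝ≥0∞) ^ (k + 1) = 1 := by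
  rw [ENNReal.tsum_geometric_add_one, ENNReal.one_sub_inv_two, inv_inv,
    ENNReal.inv_mul_cancel two_ne_zero ENNReal.ofNat_ne_top]

theorem setLIntegral_Ioc_comp_add_right (g : ℝ → ℝ≥0∞) (a b c : ℝ) :
    ∫⁻ x in Ioc a b, g (x + c) = ∫⁻ y in Ioc (a + c) (b + c), g y := by
  rw [(measurePreserving_add_right volume c).setLIntegral_comp_emb
    (measurableEmbedding_addRight c), image_add_const_Ioc]

theorem setLIntegral_Ioc_comp_eq_of_swap_halves {φ : ℝ → ℝ} {a c : ℝ} (hc : 0 ≤ c)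
    (g : ℝ → ℝ≥0∞) (h₁ : ∀ x ∈ Ioc a (a + c), φ x = x + c)
    (h₂ : ∀ x ∈ Ioc (a + c) (a + c + c), φ x = x - c) :
    ∫⁻ x in Ioc a (a + c + c), g (φ x) = ∫⁻ x in Ioc a (a + c + c), g x := by
  have hsplit : Ioc a (a + c + c) = Ioc a (a + c) ∪ Ioc (a + c) (a + c + c) :=
    (Ioc_union_Ioc_eq_Ioc (by linarith) (by linarith)).symm
  have hdisj : Disjoint (Ioc a (a + c)) (Ioc (a + c) (a + c + c)) := Ioc_disjoint_Ioc_of_le le_rfl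
  rw [hsplit, lintegral_union measurableSet_Ioc hdisj, lintegral_union measurableSet_Ioc hdisj,
    setLIntegral_congr_fun measurableSet_Ioc fun x hx => congrArg g (h₁ x hx),
    setLIntegral_congr_fun measurableSet_Ioc fun x hx => congrArg g (h₂ x hx)]
  simp only [sub_eq_add_neg, setLIntegral_Ioc_comp_add_right, add_neg_cancel_right]
  exact add_comm _ _

theorem setLIntegral_Ioc_congr_of_adjacent {μ : Measure ℝ} {F G : ℝ → ℝ≥0∞} {a : ℕ → ℝ}
    (ha : Monotone a) (N : ℕ)
    (h : ∀ m < N, ∫⁻ x in Ioc (a m) (a (m + 1)), F x ∂μ = ∫⁻ x in Ioc (a m) (a (m + 1)), G x ∂μ) :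
    ∫⁻ x in Ioc (a 0) (a N), F x ∂μ = ∫⁻ x in Ioc (a 0) (a N), G x ∂μ := by
  induction N with
  | zero => simp
  | succ N ih =>
    have hsplit := Ioc_union_Ioc_eq_Ioc (ha (Nat.zero_le N)) (ha N.le_succ)
    have hdisj := Ioc_disjoint_Ioc_of_le (a := a 0) (d := a (N + 1)) (le_refl (a N))
    rw [← hsplit, lintegral_union measurableSet_Ioc hdisj, lintegral_union measurableSet_Ioc hdisj,
      ih fun m hm => h m (by omega), h N N.lt_succ_self]

def digitFlip (n : ℕ) (x : ℝ) : ℝ := x + (-1) ^ eps n x * 2 ^ (-(n : ℤ))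

@[fun_prop]
theorem measurable_eps (n : ℕ) : Measurable (eps n) :=
  (measurable_from_top (f := fun z : ℤ => (z - 1) % 2)).comp (measurable_const_mul _).ceil

@[fun_prop]
theorem measurable_digitFlip (n : ℕ) : Measurable (digitFlip n) := by
  unfold digitFlip
  fun_prop

theorem eps_eq_emod_two_of_mem_Ioc {n : ℕ} {j : ℤ} {x : ℝ}
    (hx : x ∈ Ioc (j * (2 : ℝ) ^ (-(n : ℤ))) ((j + 1) * (2 : ℝ) ^ (-(n : ℤ)))) :
    eps n x = j % 2 := by
  have hpos : (0 : ℝ) < 2 ^ n := by positivity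
  rw [zpow_neg, zpow_natCast, ← div_eq_mul_inv, ← div_eq_mul_inv, mem_Ioc, div_lt_iff₀ hpos,
    le_div_iff₀ hpos] at hx
  have hceil : ⌈(2 : ℝ) ^ n * x⌉ = j + 1 := by
    rw [Int.ceil_eq_iff]
    push_cast
    constructor <;> linarith [hx.1, hx.2]
  simp [eps, hceil]

theorem digitFlip_of_mem_Ioc_even {n m : ℕ} {x : ℝ}
    (hx : x ∈ Ioc (2 * m * (2 : ℝ) ^ (-(n : ℤ))) ((2 * m + 1) * (2 : ℝ) ^ (-(n : ℤ)))) :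
    digitFlip n x = x + 2 ^ (-(n : ℤ)) := by
  have := eps_eq_emod_two_of_mem_Ioc (j := 2 * m) (by exact_mod_cast hx)
  simp [digitFlip, this]

theorem digitFlip_of_mem_Ioc_odd {n m : ℕ} {x : ℝ}
    (hx : x ∈ Ioc ((2 * m + 1) * (2 : ℝ) ^ (-(n : ℤ))) ((2 * m + 2) * (2 : ℝ) ^ (-(n : ℤ)))) :
    digitFlip n x = x - 2 ^ (-(n : ℤ)) := by
  have := eps_eq_emod_two_of_mem_Ioc (j := 2 * m + 1) (by push_cast; convert hx using 3; ring)
  rw [digitFlip, this, Int.mul_add_emod_self_left, Int.one_emod_two, zpow_one, neg_one_mul,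
    sub_eq_add_neg]

theorem setLIntegral_Ioc_zero_one_comp_digitFlip (k : ℕ) (g : ℝ → ℝ≥0∞) :
    ∫⁻ x in Ioc 0 1, g (digitFlip (k + 1) x) = ∫⁻ x in Ioc 0 1, g x := by
  set c : ℝ := 2 ^ (-((k + 1 : ℕ) : ℤ)) with hc
  have hc0 : 0 ≤ c := by positivity
  have hblocks : ((2 ^ k : ℕ) : ℝ) * (c + c) = 1 := by
    rw [hc, zpow_neg, zpow_natCast, pow_succ]; push_cast; field_simp; ring
  have hmono : Monotone fun m : ℕ => m * (c + c) := fun m n hmn =>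
    mul_le_mul_of_nonneg_right (Nat.cast_le.2 hmn) (by linarith)
  have hblock : ∀ m : ℕ, ∫⁻ x in Ioc (m * (c + c)) ((m + 1 : ℕ) * (c + c)), g (digitFlip (k + 1) x)
      = ∫⁻ x in Ioc (m * (c + c)) ((m + 1 : ℕ) * (c + c)), g x := fun m => by
    rw [show ((m + 1 : ℕ) : ℝ) * (c + c) = m * (c + c) + c + c by push_cast; ring]
    refine setLIntegral_Ioc_comp_eq_of_swap_halves hc0 g (fun x hx => ?_) (fun x hx => ?_)
    · exact digitFlip_of_mem_Ioc_even (by convert hx using 2 <;> ring)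
    · exact digitFlip_of_mem_Ioc_odd (by convert hx using 2 <;> ring)
  simpa only [Nat.cast_zero, zero_mul, hblocks] using
    setLIntegral_Ioc_congr_of_adjacent hmono (2 ^ k) fun m _ => hblock m

theorem norm_cos_add_I_mul_neg_one_zpow_mul_sin (θ : ℝ) (e : ℤ) :
    ‖(Real.cos θ : ℂ) + Complex.I * (-1) ^ e * Real.sin θ‖ = 1 := by
  rcases Int.even_or_odd e with he | he
  · simpa [he.neg_one_zpow, mul_comm] using Complex.norm_cos_add_sin_mul_I θ
  · simpa [he.neg_one_zpow, mul_comm] using Complex.norm_cos_add_sin_mul_I (-θ)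

theorem enorm_CthetaTerm (θ : ℝ) (f : ℝ → ℂ) (x : ℝ) (k : ℕ) :
    ‖CthetaTerm θ f x k‖ₑ = 2⁻¹ ^ (k + 1) * ‖f (digitFlip (k + 1) x)‖ₑ := by
  have hflip : digitFlip (k + 1) x =
      x + (-1 : ℝ) ^ eps (k + 1) x * (2 : ℝ) ^ (-((k : ℤ) + 1)) := by
    simp [digitFlip]
  rw [CthetaTerm, ← hflip, enorm_mul, enorm_mul,
    ← ofReal_norm (_ + _), norm_cos_add_I_mul_neg_one_zpow_mul_sin, ENNReal.ofReal_one, mul_one]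
  congr 1
  rw [← Nat.cast_succ, zpow_neg, zpow_natCast, enorm_inv (by norm_num), enorm_pow, ENNReal.inv_pow,
    show ‖(2 : ℂ)‖ₑ = 2 by rw [← ofReal_norm]; simp]

theorem lintegral_sq_tsum_enorm_CthetaTerm_le (θ : ℝ) {f : ℝ → ℂ} (hf : Measurable f) :
    ∫⁻ x in Ioc 0 1, (∑' k, ‖CthetaTerm θ f x k‖ₑ) ^ 2 ≤ ∫⁻ x in Ioc 0 1, ‖f x‖ₑ ^ 2 := by
  calc ∫⁻ x in Ioc 0 1, (∑' k, ‖CthetaTerm θ f x k‖ₑ) ^ 2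
      = ∫⁻ x in Ioc 0 1, (∑' k : ℕ, 2⁻¹ ^ (k + 1) * ‖f (digitFlip (k + 1) x)‖ₑ) ^ 2 := by
        simp_rw [enorm_CthetaTerm]
    _ ≤ ∫⁻ x in Ioc 0 1, ∑' k : ℕ, 2⁻¹ ^ (k + 1) * ‖f (digitFlip (k + 1) x)‖ₑ ^ 2 :=
        lintegral_mono fun x => (ENNReal.sq_tsum_mul_le _ _).trans_eq
          (by rw [ENNReal.tsum_inv_two_pow_succ, one_mul])
    _ = ∑' k : ℕ, 2⁻¹ ^ (k + 1) * ∫⁻ x in Ioc 0 1, ‖f (digitFlip (k + 1) x)‖ₑ ^ 2 := by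
        rw [lintegral_tsum fun k => by fun_prop]
        exact tsum_congr fun k => lintegral_const_mul' _ _ (by simp)
    _ = ∫⁻ x in Ioc 0 1, ‖f x‖ₑ ^ 2 := by
        simp_rw [setLIntegral_Ioc_zero_one_comp_digitFlip _ fun y => ‖f y‖ₑ ^ 2]
        rw [ENNReal.tsum_mul_right, ENNReal.tsum_inv_two_pow_succ, one_mul]

theorem integral_norm_sq_le_of_lintegral_enorm_sq_le {α E : Type*} [MeasurableSpace α]
    [NormedAddCommGroup E] {μ : Measure α} {f g : α → E} (hg : AEStronglyMeasurable g μ)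
    (hf : Integrable (fun x => ‖f x‖ ^ 2) μ) (h : ∫⁻ x, ‖g x‖ₑ ^ 2 ∂μ ≤ ∫⁻ x, ‖f x‖ₑ ^ 2 ∂μ) :
    ∫ x, ‖g x‖ ^ 2 ∂μ ≤ ∫ x, ‖f x‖ ^ 2 ∂μ := by
  have hofReal : ∀ y : E, ENNReal.ofReal (‖y‖ ^ 2) = ‖y‖ₑ ^ 2 := fun y => by
    rw [ENNReal.ofReal_pow (norm_nonneg y), ofReal_norm]
  rw [integral_eq_lintegral_of_nonneg_ae (ae_of_all _ fun x => by positivity) (by fun_prop),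
    integral_eq_lintegral_of_nonneg_ae (ae_of_all _ fun x => by positivity) hf.aestronglyMeasurable]
  simp_rw [hofReal]
  exact ENNReal.toReal_mono (by simpa [hofReal] using hf.lintegral_lt_top.ne) h

/-- For measurable `f` with `∫_{(0,1]} |f|² < ∞`, the series defining `C_θ[f](x)`
converges absolutely for a.e. `x ∈ (0,1]` and `∫_{(0,1]} |C_θ[f]|² ≤ ∫_{(0,1]} |f|²`;
i.e. the operator `C_θ = cos θ · C_x + sin θ · C_y` has norm at most `1` on `L²(0,1]`. -/
theorem stmt14 (θ : ℝ) (f : ℝ → ℂ) (hmeas : Measurable f)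
    (hf : IntegrableOn (fun x => ‖f x‖ ^ 2) (Set.Ioc (0 : ℝ) 1)) :
    (∀ᵐ x ∂volume.restrict (Set.Ioc (0 : ℝ) 1),
        Summable fun k : ℕ => ‖CthetaTerm θ f x k‖) ∧
    (∫ x in Set.Ioc (0 : ℝ) 1, ‖∑' k : ℕ, CthetaTerm θ f x k‖ ^ 2) ≤
      ∫ x in Set.Ioc (0 : ℝ) 1, ‖f x‖ ^ 2 := by
  have hmeas_term : ∀ k, Measurable fun x => CthetaTerm θ f x k := fun k => by
    unfold CthetaTerm; fun_prop
  have hbound := lintegral_sq_tsum_enorm_CthetaTerm_le θ hmeas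
  have hfin : ∫⁻ x in Ioc 0 1, ‖f x‖ₑ ^ 2 ≠ ⊤ := by simpa [enorm_pow] using hf.2.ne
  refine ⟨?_, integral_norm_sq_le_of_lintegral_enorm_sq_le
    (Measurable.tsum hmeas_term).aestronglyMeasurable hf ?_⟩
  · filter_upwards [ae_lt_top (by fun_prop) (ne_top_of_le_ne_top hfin hbound)] with x hx
    exact tsum_enorm_ne_top_iff_summable_norm.1 (by simpa using hx.ne)
  · exact (lintegral_mono fun x => by gcongr; exact enorm_tsum_le_tsum_enorm).trans hbound
end
end
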